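/- arXiv:1412.7617 — 6 statements merged into one kernel-verified Lean document; each statement's English description precedes it below -/
import Mathlib

section
/- Let m_1,…,m_I and n_1,…,n_{I+1} be positive integers and set M := \sum_{i=1}^I m_i. Then \sum_{i=1}^{I} [m_i]·[1 + \sum_{j=1}^{i} n_j] · (\prod_{j=i+1}^{I} [1 + \sum_{k=1}^{j}(n_k + m_k)]) / (\prod_{j=i}^{I} [1 + n_j + \sum_{k=1}^{j-1}(n_k + m_k)]) = [M], where [n] denotes the quantum integer (q^n - q^{-n})/(q - q^{-1}). -/
/-!
Induction on `I`. Passing from `I` to `I + 1` multiplies every old summand by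
`[D + m_{I+1}] / [D]`, where `D = 1 + n_{I+1} + ∑_{k ≤ I} (n_k + m_k)` is the new denominator
factor, and adds the summand `[m_{I+1}] [D - M_I] / [D]`. By induction the old summands add up to
`[M_I]`, so the step is the three-term identity `[a][d + c] + [c][d - a] = [a + c][d]` with
`a = M_I`, `c = m_{I+1}`, `d = D`.
-/

open Finset

/-- The quantum integer `[n] = (q^n - q^(-n))/(q - q⁻¹)`. -/
noncomputable def qint {K : Type*} [Field K] (q : K) (n : ℤ) : K :=
  (q ^ n - q ^ (-n)) / (q - q⁻¹)

section

variable {K : Type*} [Field K]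

theorem qint_zero (q : K) : qint q 0 = 0 := by
  simp [qint]

theorem qint_mul_add_qint_mul_sub (q : K) (a c d : ℤ) :
    qint q a * qint q (d + c) + qint q c * qint q (d - a) = qint q (a + c) * qint q d := by
  by_cases h : q - q⁻¹ = 0
  · -- division by zero makes every `qint q` vanish
    simp [qint, h]
  have hq : q ≠ 0 := by rintro rfl; simp at h
  simp only [qint, sub_eq_add_neg, neg_add, zpow_add₀ hq, zpow_neg]
  field_simp
  ring

theorem sum_qint_ratio_eq_qint_sum (q : K) (m n : ℕ → ℤ) (I : ℕ)
    (hden : ∀ j ∈ Icc 1 I, qint q (1 + n j + ∑ k ∈ Icc 1 (j - 1), (n k + m k)) ≠ 0) :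
    ∑ i ∈ Icc 1 I, qint q (m i) * qint q (1 + ∑ j ∈ Icc 1 i, n j) *
        (∏ j ∈ Icc (i + 1) I, qint q (1 + ∑ k ∈ Icc 1 j, (n k + m k))) /
        (∏ j ∈ Icc i I, qint q (1 + n j + ∑ k ∈ Icc 1 (j - 1), (n k + m k)))
      = qint q (∑ i ∈ Icc 1 I, m i) := by
  induction I with
  | zero => simp [qint_zero]
  | succ I ih =>
    set D := 1 + n (I + 1) + ∑ k ∈ Icc 1 I, (n k + m k) with hD
    have hDne : qint q D ≠ 0 := by simpa using hden (I + 1) (by simp)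
    have hstep : ∀ i ∈ Icc 1 I,
        qint q (m i) * qint q (1 + ∑ j ∈ Icc 1 i, n j) *
          (∏ j ∈ Icc (i + 1) (I + 1), qint q (1 + ∑ k ∈ Icc 1 j, (n k + m k))) /
          (∏ j ∈ Icc i (I + 1), qint q (1 + n j + ∑ k ∈ Icc 1 (j - 1), (n k + m k)))
        = qint q (m i) * qint q (1 + ∑ j ∈ Icc 1 i, n j) *
          (∏ j ∈ Icc (i + 1) I, qint q (1 + ∑ k ∈ Icc 1 j, (n k + m k))) /
          (∏ j ∈ Icc i I, qint q (1 + n j + ∑ k ∈ Icc 1 (j - 1), (n k + m k))) *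
          (qint q (D + m (I + 1)) / qint q D) := by
      intro i hi
      rw [mem_Icc] at hi
      rw [prod_Icc_succ_top (by omega), prod_Icc_succ_top (by omega), sum_Icc_succ_top (by omega),
        Nat.add_sub_cancel, hD]
      ring_nf
    rw [sum_Icc_succ_top (by omega), sum_congr rfl hstep, ← sum_mul,
      ih fun j hj => hden j (Icc_subset_Icc_right (by omega) hj)]
    have hN : 1 + ∑ j ∈ Icc 1 (I + 1), n j = D - ∑ i ∈ Icc 1 I, m i := by
      rw [hD, sum_Icc_succ_top (by omega), sum_add_distrib]
      ring
    rw [Icc_eq_empty (by omega : ¬I + 1 + 1 ≤ I + 1), prod_empty, Icc_self, prod_singleton,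
      Nat.add_sub_cancel, ← hD, hN, sum_Icc_succ_top (by omega : 1 ≤ I + 1) m]
    field_simp
    linear_combination qint_mul_add_qint_mul_sub q (∑ i ∈ Icc 1 I, m i) (m (I + 1)) D

end

theorem sum_rule_app0_general {K : Type*} [Field K] (q : K)
    (hpos : ∀ n : ℤ, 1 ≤ n → qint q n ≠ 0)
    (I : ℕ) (m n : ℕ → ℕ) :
    ∑ i ∈ Icc 1 I,
      qint q (m i) * qint q (1 + ∑ j ∈ Icc 1 i, (n j : ℤ)) *
        (∏ j ∈ Icc (i + 1) I, qint q (1 + ∑ k ∈ Icc 1 j, ((n k : ℤ) + (m k : ℤ)))) /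
        (∏ j ∈ Icc i I, qint q (1 + (n j : ℤ) + ∑ k ∈ Icc 1 (j - 1), ((n k : ℤ) + (m k : ℤ))))
      = qint q (∑ i ∈ Icc 1 I, (m i : ℤ)) := by
  refine sum_qint_ratio_eq_qint_sum q (fun k => m k) (fun k => n k) I fun j _ => hpos _ ?_
  have hS : (0 : ℤ) ≤ ∑ k ∈ Icc 1 (j - 1), ((n k : ℤ) + m k) := sum_nonneg fun k _ => by positivity
  omega

/-- Lemma A.2 (lemma-app0): with `M = ∑ m_i`,
`∑_{i=1}^{I} [m_i]·[1+∑_{j≤i} n_j]·(∏_{j=i+1}^{I}[1+∑_{k≤j}(n_k+m_k)])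
  /(∏_{j=i}^{I}[1+n_j+∑_{k<j}(n_k+m_k)]) = [M]`. -/
theorem sum_rule_app0 {K : Type*} [Field K] (q : K)
    (hq : q ≠ 0) (hq2 : q ^ 2 ≠ 1)
    (hpos : ∀ n : ℤ, 1 ≤ n → qint q n ≠ 0)
    (I : ℕ) (m n : ℕ → ℕ)
    (hm : ∀ i ∈ Icc 1 I, 1 ≤ m i) (hn : ∀ i ∈ Icc 1 (I + 1), 1 ≤ n i) :
    ∑ i ∈ Icc 1 I,
      qint q (m i) * qint q (1 + ∑ j ∈ Icc 1 i, (n j : ℤ)) *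
        (∏ j ∈ Icc (i + 1) I, qint q (1 + ∑ k ∈ Icc 1 j, ((n k : ℤ) + (m k : ℤ)))) /
        (∏ j ∈ Icc i I, qint q (1 + (n j : ℤ) + ∑ k ∈ Icc 1 (j - 1), ((n k : ℤ) + (m k : ℤ))))
      = qint q (∑ i ∈ Icc 1 I, (m i : ℤ)) :=
  sum_rule_app0_general q hpos I m n
end

section
/- Let m_1,…,m_J and n_1,…,n_{J+1} be positive integers, set M := \sum_{i=1}^{J} m_i and N := \sum_{i=1}^{J+1} n_i. Then \sum_{i=1}^{J} [1 + \sum_{j=1}^{i} n_j]·[m_i] · (\prod_{j=i+2}^{J+1} [1 + \sum_{k=1}^{j-1}(n_k + m_k)]) / (\prod_{j=i}^{J+1} [1 + n_j + \sum_{k=1}^{j-1}(n_k + m_k)]) = [M] / [M + N + 1], where [n] is the quantum integer. -/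
/-!
Induction on `J`. Passing from `J` to `J + 1` multiplies every old summand by the same factor
`[1 + S_{J+1}] / [1 + n_{J+2} + S_{J+1}]`, where `S_t = ∑_{k ≤ t} (n_k + m_k)`, and adds one new
summand. With `M = ∑_{i ≤ J} m_i` and `C = 1 + ∑_{j ≤ J+1} n_j`, the old sum and the new summand
combine into the new right-hand side by the three-term identity
`[a][b + c] = [b][a + c] + [c][a - b]` for `a = M + m_{J+1}`, `b = M`, `c = C`.
-/

open Finset

lemma qint_mul_qint_add {K : Type*} [Field K] (q : K) (a b c : ℤ) :
    qint q a * qint q (b + c) = qint q b * qint q (a + c) + qint q c * qint q (a - b) := by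
  rcases eq_or_ne q 0 with rfl | hq
  · -- every `[n]` is `0` here, its denominator being `0 - 0⁻¹ = 0`
    simp [qint]
  simp only [qint, div_mul_div_comm, ← add_div, zpow_add₀ hq, zpow_sub₀ hq, zpow_neg, neg_add,
    neg_sub]
  ring

lemma qint_sum_rule_step {K : Type*} [Field K] (q : K) (M m C : ℤ) {d : K}
    (hMC : qint q (M + C) ≠ 0) (hd : d ≠ 0) :
    qint q M / qint q (M + C) * (qint q (M + m + C) / d) +
      qint q C * qint q m / (qint q (M + C) * d) = qint q (M + m) / d := by
  have key := qint_mul_qint_add q (M + m) M C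
  rw [add_sub_cancel_left] at key
  field_simp
  linear_combination -key

section SumRuleTerm

variable {K : Type*} [Field K] (q : K) (m n : ℕ → ℕ)

noncomputable def sumRuleTerm (J i : ℕ) : K :=
  qint q (1 + ∑ j ∈ Icc 1 i, (n j : ℤ)) * qint q (m i) *
    (∏ j ∈ Icc (i + 2) (J + 1), qint q (1 + ∑ k ∈ Icc 1 (j - 1), ((n k : ℤ) + (m k : ℤ)))) /
    (∏ j ∈ Icc i (J + 1), qint q (1 + (n j : ℤ) + ∑ k ∈ Icc 1 (j - 1), ((n k : ℤ) + (m k : ℤ))))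

lemma sumRuleTerm_succ {J i : ℕ} (hi : i ≤ J) :
    sumRuleTerm q m n (J + 1) i = sumRuleTerm q m n J i *
      (qint q (1 + ∑ k ∈ Icc 1 (J + 1), ((n k : ℤ) + (m k : ℤ))) /
        qint q (1 + (n (J + 2) : ℤ) + ∑ k ∈ Icc 1 (J + 1), ((n k : ℤ) + (m k : ℤ)))) := by
  rw [sumRuleTerm, sumRuleTerm, prod_Icc_succ_top (show i + 2 ≤ J + 1 + 1 by omega),
    prod_Icc_succ_top (show i ≤ J + 1 + 1 by omega)]
  simp only [add_tsub_cancel_right]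
  ring

lemma sumRuleTerm_self (J : ℕ) :
    sumRuleTerm q m n (J + 1) (J + 1) =
      qint q (1 + ∑ j ∈ Icc 1 (J + 1), (n j : ℤ)) * qint q (m (J + 1)) /
        (qint q (1 + (n (J + 1) : ℤ) + ∑ k ∈ Icc 1 J, ((n k : ℤ) + (m k : ℤ))) *
          qint q (1 + (n (J + 2) : ℤ) + ∑ k ∈ Icc 1 (J + 1), ((n k : ℤ) + (m k : ℤ)))) := by
  rw [sumRuleTerm, Icc_eq_empty (show ¬J + 1 + 2 ≤ J + 1 + 1 by omega), prod_empty,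
    prod_Icc_succ_top (show J + 1 ≤ J + 1 + 1 by omega), Icc_self, prod_singleton]
  simp only [add_tsub_cancel_right, mul_one]

end SumRuleTerm

theorem sum_rule_app1_general {K : Type*} [Field K] (q : K)
    (hpos : ∀ n : ℤ, 1 ≤ n → qint q n ≠ 0)
    (J : ℕ) (m n : ℕ → ℕ) :
    ∑ i ∈ Icc 1 J,
      qint q (1 + ∑ j ∈ Icc 1 i, (n j : ℤ)) * qint q (m i) *
        (∏ j ∈ Icc (i + 2) (J + 1), qint q (1 + ∑ k ∈ Icc 1 (j - 1), ((n k : ℤ) + (m k : ℤ)))) /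
        (∏ j ∈ Icc i (J + 1), qint q (1 + (n j : ℤ) + ∑ k ∈ Icc 1 (j - 1), ((n k : ℤ) + (m k : ℤ))))
      = qint q (∑ i ∈ Icc 1 J, (m i : ℤ)) /
          qint q ((∑ i ∈ Icc 1 J, (m i : ℤ)) + (∑ i ∈ Icc 1 (J + 1), (n i : ℤ)) + 1) := by
  change ∑ i ∈ Icc 1 J, sumRuleTerm q m n J i = _
  induction J with
  | zero => simp [qint]
  | succ J ih =>
    rw [sum_Icc_succ_top (by omega),
      sum_congr rfl fun i hi => sumRuleTerm_succ q m n (mem_Icc.1 hi).2, ← sum_mul, ih,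
      sumRuleTerm_self]
    simp only [sum_add_distrib, sum_Icc_succ_top (show 1 ≤ J + 1 by omega),
      sum_Icc_succ_top (show 1 ≤ J + 1 + 1 by omega), ← Nat.cast_sum]
    generalize ∑ k ∈ Icc 1 J, n k = A, ∑ k ∈ Icc 1 J, m k = M, n (J + 1) = a, n (J + 1 + 1) = b,
      m (J + 1) = c
    rw [show (M : ℤ) + (A + a) + 1 = M + (1 + (A + a)) by ring,
      show 1 + (A + M + (a + c) : ℤ) = M + c + (1 + (A + a)) by ring,
      show 1 + b + (A + M + (a + c) : ℤ) = M + c + (A + a + b) + 1 by ring,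
      show 1 + a + (A + M : ℤ) = M + (1 + (A + a)) by ring]
    exact qint_sum_rule_step q M c _ (hpos _ (by omega)) (hpos _ (by omega))

/-- Lemma (lemma-app1): with `M = ∑_{i=1}^J m_i`, `N = ∑_{i=1}^{J+1} n_i`,
`∑_{i=1}^{J} [1+∑_{j≤i}n_j]·[m_i]·(∏_{j=i+2}^{J+1}[1+∑_{k<j}(n_k+m_k)])
  /(∏_{j=i}^{J+1}[1+n_j+∑_{k<j}(n_k+m_k)]) = [M]/[M+N+1]`. -/
theorem sum_rule_app1 {K : Type*} [Field K] (q : K)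
    (hq : q ≠ 0) (hq2 : q ^ 2 ≠ 1)
    (hpos : ∀ n : ℤ, 1 ≤ n → qint q n ≠ 0)
    (J : ℕ) (m n : ℕ → ℕ)
    (hm : ∀ i ∈ Icc 1 J, 1 ≤ m i) (hn : ∀ i ∈ Icc 1 (J + 1), 1 ≤ n i) :
    ∑ i ∈ Icc 1 J,
      qint q (1 + ∑ j ∈ Icc 1 i, (n j : ℤ)) * qint q (m i) *
        (∏ j ∈ Icc (i + 2) (J + 1), qint q (1 + ∑ k ∈ Icc 1 (j - 1), ((n k : ℤ) + (m k : ℤ)))) /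
        (∏ j ∈ Icc i (J + 1), qint q (1 + (n j : ℤ) + ∑ k ∈ Icc 1 (j - 1), ((n k : ℤ) + (m k : ℤ))))
      = qint q (∑ i ∈ Icc 1 J, (m i : ℤ)) /
          qint q ((∑ i ∈ Icc 1 J, (m i : ℤ)) + (∑ i ∈ Icc 1 (J + 1), (n i : ℤ)) + 1) :=
  sum_rule_app1_general q hpos J m n
end

section
/- Let n_1,…,n_I and m_1,…,m_I be positive integers, v_i := \sum_{j=1}^{i-1}(m_j + n_j). Then \sum_{i=1}^{I} q^{-\sum_{j=1}^{i-1} n_j - 1}·[m_i]/([1+v_i]·[1+v_{i+1}]) · \prod_{j=i+1}^{I} [1 + m_j + v_j]/[1 + v_{j+1}] = \prod_{j=1}^{I} [1 + m_j + v_j]/[1 + v_{j+1}] - q^{\sum_{i=1}^{I} m_i}/[1 + v_{I+1}], where [n] := (q^n - q^{-n})/(q - q^{-1}). -/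
open Finset

/-!
Each summand is a difference `F i - F (i + 1)` with
`F i = q ^ (m_1 + ⋯ + m_{i-1}) / [1 + v_i] * ∏_{j=i}^I [1 + m_j + v_j] / [1 + v_{j+1}]`,
so the sum telescopes to `F 1 - F (I + 1)`, which is the right-hand side since `[1] = 1`.
The difference is the addition rule `[a + m] = q^m [a] + q^(-a) [m]` with `a = 1 + v_i`,
using `v_i = (m_1 + ⋯ + m_{i-1}) + (n_1 + ⋯ + n_{i-1})`.
-/

section
variable {K : Type*} [Field K] {q : K}

lemma sub_inv_ne_zero_of_sq_ne_one (hq : q ≠ 0) (hq2 : q ^ 2 ≠ 1) : q - q⁻¹ ≠ 0 := by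
  rw [sub_ne_zero]
  contrapose! hq2
  field_simp at hq2
  exact hq2

lemma qint_one (hq : q ≠ 0) (hq2 : q ^ 2 ≠ 1) : qint q 1 = 1 := by
  rw [qint, zpow_one, zpow_neg_one]
  exact div_self (sub_inv_ne_zero_of_sq_ne_one hq hq2)

lemma qint_add (hq : q ≠ 0) (a b : ℤ) :
    qint q (a + b) = q ^ b * qint q a + q ^ (-a) * qint q b := by
  simp only [qint, mul_div_assoc', ← add_div, neg_add, zpow_add₀ hq]
  ring

lemma zpow_sub_mul_qint_div (hq : q ≠ 0) {a : ℤ} (ha : qint q a ≠ 0) (M m : ℤ) (b : K) :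
    q ^ (M - a) * qint q m / (qint q a * b) =
      q ^ M / qint q a * (qint q (a + m) / b) - q ^ (M + m) / b := by
  rw [qint_add hq, zpow_sub₀ hq, zpow_add₀ hq, zpow_neg]
  field_simp
  ring

end

lemma sum_Icc_one_sub_succ {G : Type*} [AddCommGroup G] (f : ℕ → G) (n : ℕ) :
    ∑ i ∈ Icc 1 n, (f i - f (i + 1)) = f 1 - f (n + 1) := by
  rw [← neg_sub, ← sum_Ico_sub f (by omega : 1 ≤ n + 1), Ico_add_one_right_eq_Icc,
    ← sum_neg_distrib]
  simp only [neg_sub]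

theorem sum_rule_app9_general {K : Type*} [Field K] (q : K)
    (hq : q ≠ 0) (hq2 : q ^ 2 ≠ 1)
    (hpos : ∀ n : ℤ, 1 ≤ n → qint q n ≠ 0)
    (I : ℕ) (m n : ℕ → ℕ)
    (v : ℕ → ℤ) (hv : ∀ i, v i = ∑ j ∈ Icc 1 (i - 1), ((m j : ℤ) + (n j : ℤ))) :
    ∑ i ∈ Icc 1 I,
      q ^ (-(∑ j ∈ Icc 1 (i - 1), (n j : ℤ)) - 1) * qint q (m i) /
          (qint q (1 + v i) * qint q (1 + v (i + 1))) *
        ∏ j ∈ Icc (i + 1) I, qint q (1 + (m j : ℤ) + v j) / qint q (1 + v (j + 1))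
      = (∏ j ∈ Icc 1 I, qint q (1 + (m j : ℤ) + v j) / qint q (1 + v (j + 1))) -
          q ^ (∑ i ∈ Icc 1 I, (m i : ℤ)) / qint q (1 + v (I + 1)) := by
  have hqint_v : ∀ i, qint q (1 + v i) ≠ 0 := fun i =>
    hpos _ (le_add_of_nonneg_right ((hv i).symm ▸ sum_nonneg fun j _ => by positivity))
  set R : ℕ → K := fun j => qint q (1 + (m j : ℤ) + v j) / qint q (1 + v (j + 1))
  set F : ℕ → K := fun i =>
    q ^ (∑ j ∈ Icc 1 (i - 1), (m j : ℤ)) / qint q (1 + v i) * ∏ j ∈ Icc i I, R j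
  have hterm : ∀ i ∈ Icc 1 I,
      q ^ (-(∑ j ∈ Icc 1 (i - 1), (n j : ℤ)) - 1) * qint q (m i) /
          (qint q (1 + v i) * qint q (1 + v (i + 1))) * ∏ j ∈ Icc (i + 1) I, R j
        = F i - F (i + 1) := by
    intro i hi
    obtain ⟨hi1, hiI⟩ := mem_Icc.mp hi
    have hexp : -(∑ j ∈ Icc 1 (i - 1), (n j : ℤ)) - 1
        = (∑ j ∈ Icc 1 (i - 1), (m j : ℤ)) - (1 + v i) := by
      rw [hv, sum_add_distrib]; ring
    have hM : ∑ j ∈ Icc 1 (i + 1 - 1), (m j : ℤ) = ∑ j ∈ Icc 1 (i - 1), (m j : ℤ) + m i := by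
      obtain ⟨k, rfl⟩ := Nat.exists_eq_add_of_le' hi1
      exact sum_Icc_succ_top (by omega) _
    simp only [F, R, ← mul_prod_Ioc_eq_prod_Icc hiI, ← Icc_add_one_left_eq_Ioc, hexp, hM,
      zpow_sub_mul_qint_div hq (hqint_v i), add_right_comm (1 : ℤ)]
    ring
  have hv_one : v 1 = 0 := by simp [hv]
  rw [sum_congr rfl hterm, sum_Icc_one_sub_succ]
  simp [F, hv_one, qint_one hq hq2]

/-- Lemma (lemma-app-eN2, Eqn. (app-9)): with `v_i = ∑_{j<i}(m_j+n_j)`,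
`∑_{i=1}^I q^{-∑_{j<i}n_j - 1}[m_i]/([1+v_i][1+v_{i+1}]) ∏_{j=i+1}^I [1+m_j+v_j]/[1+v_{j+1}]
  = ∏_{j=1}^I [1+m_j+v_j]/[1+v_{j+1}] - q^{∑ m_i}/[1+v_{I+1}]`. -/
theorem sum_rule_app9 {K : Type*} [Field K] (q : K)
    (hq : q ≠ 0) (hq2 : q ^ 2 ≠ 1)
    (hpos : ∀ n : ℤ, 1 ≤ n → qint q n ≠ 0)
    (I : ℕ) (m n : ℕ → ℕ)
    (hm : ∀ i ∈ Icc 1 I, 1 ≤ m i) (hn : ∀ i ∈ Icc 1 I, 1 ≤ n i)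
    (v : ℕ → ℤ) (hv : ∀ i, v i = ∑ j ∈ Icc 1 (i - 1), ((m j : ℤ) + (n j : ℤ))) :
    ∑ i ∈ Icc 1 I,
      q ^ (-(∑ j ∈ Icc 1 (i - 1), (n j : ℤ)) - 1) * qint q (m i) /
          (qint q (1 + v i) * qint q (1 + v (i + 1))) *
        ∏ j ∈ Icc (i + 1) I, qint q (1 + (m j : ℤ) + v j) / qint q (1 + v (j + 1))
      = (∏ j ∈ Icc 1 I, qint q (1 + (m j : ℤ) + v j) / qint q (1 + v (j + 1))) -
          q ^ (∑ i ∈ Icc 1 I, (m i : ℤ)) / qint q (1 + v (I + 1)) :=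
  sum_rule_app9_general q hq hq2 hpos I m n v hv
end

section
/- Let n_1,…,n_I and m_1,…,m_I be positive integers and v_i := \sum_{j=1}^{i}(n_j + m_j) with v_0 = 0. Then \sum_{i=1}^{I} q^{-\sum_{j=1}^{i} n_j}·[m_i]/[v_i] · \prod_{l=1}^{i-1} [n_l + v_{l-1}]/[v_l] = 1 - q^{\sum_{i=1}^{I} m_i} · \prod_{l=1}^{I} [n_l + v_{l-1}]/[v_l], where [n] is the quantum integer (q^n - q^{-n})/(q - q^{-1}). -/
/-! The sum telescopes. With `F i = q^(m_1 + ⋯ + m_i) ∏_{l ≤ i} [n_l + v_{l-1}]/[v_l]`, so that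
`F 0 = 1`, the `i`-th term equals `F (i - 1) - F i`: after cancelling the common factor this is the
three-term relation `q^(-a) [c] = q^b [a + b + c] - q^(b + c) [a + b]` with `a = n_1 + ⋯ + n_i`,
`b = m_1 + ⋯ + m_(i-1)`, `c = m_i`. -/

open Finset

theorem Finset.sum_Icc_one_pred_sub {M : Type*} [AddCommGroup M] (f : ℕ → M) (I : ℕ) :
    ∑ i ∈ Icc 1 I, (f (i - 1) - f i) = f 0 - f I := by
  induction I with
  | zero => simp
  | succ I ih => rw [sum_Icc_succ_top (by omega), ih, Nat.add_sub_cancel]; abel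

section

variable {K : Type*} [Field K] {q : K}

theorem zpow_neg_mul_qint (hq : q ≠ 0) (a b c : ℤ) :
    q ^ (-a) * qint q c = q ^ b * qint q (a + b + c) - q ^ (b + c) * qint q (a + b) := by
  simp only [qint, mul_div_assoc', ← sub_div, mul_sub, ← zpow_add₀ hq]
  ring_nf

variable (q) in
noncomputable def scaledQProd (m n : ℕ → ℕ) (v : ℕ → ℤ) (i : ℕ) : K :=
  q ^ (∑ j ∈ Icc 1 i, (m j : ℤ)) * ∏ l ∈ Icc 1 i, qint q ((n l : ℤ) + v (l - 1)) / qint q (v l)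

theorem zpow_neg_mul_qint_div_mul_prod_eq_scaledQProd_sub (hq : q ≠ 0)
    (hpos : ∀ n : ℤ, 1 ≤ n → qint q n ≠ 0) {m n : ℕ → ℕ} {v : ℕ → ℤ}
    (hv : ∀ i, v i = ∑ j ∈ Icc 1 i, ((n j : ℤ) + (m j : ℤ))) {k : ℕ} (hnk : 1 ≤ n (k + 1)) :
    q ^ (-∑ j ∈ Icc 1 (k + 1), (n j : ℤ)) * qint q (m (k + 1)) / qint q (v (k + 1)) *
        ∏ l ∈ Icc 1 k, qint q ((n l : ℤ) + v (l - 1)) / qint q (v l)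
      = scaledQProd q m n v k - scaledQProd q m n v (k + 1) := by
  have hk : 1 ≤ k + 1 := by omega
  simp only [scaledQProd, sum_Icc_succ_top hk (fun j ↦ (m j : ℤ)),
    sum_Icc_succ_top hk (fun j ↦ (n j : ℤ)), prod_Icc_succ_top hk, Nat.add_sub_cancel]
  set N := ∑ j ∈ Icc 1 k, (n j : ℤ) + n (k + 1)
  set M := ∑ j ∈ Icc 1 k, (m j : ℤ)
  have hvk : (n (k + 1) : ℤ) + v k = N + M := by
    rw [hv, sum_add_distrib]; ring
  have hvk1 : v (k + 1) = N + M + m (k + 1) := by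
    rw [hv, sum_Icc_succ_top hk, ← hvk, hv]; ring
  have hden : qint q (N + M + m (k + 1)) ≠ 0 := by
    have : 0 ≤ M := sum_nonneg fun _ _ ↦ by positivity
    have : 0 ≤ ∑ j ∈ Icc 1 k, (n j : ℤ) := sum_nonneg fun _ _ ↦ by positivity
    exact hpos _ (by omega)
  rw [hvk, hvk1, zpow_neg_mul_qint hq N M]
  field_simp

end

theorem sum_rule_app15_general {K : Type*} [Field K] (q : K)
    (hq : q ≠ 0)
    (hpos : ∀ n : ℤ, 1 ≤ n → qint q n ≠ 0)
    (I : ℕ) (m n : ℕ → ℕ)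
    (hn : ∀ i ∈ Icc 1 I, 1 ≤ n i)
    (v : ℕ → ℤ) (hv : ∀ i, v i = ∑ j ∈ Icc 1 i, ((n j : ℤ) + (m j : ℤ))) :
    ∑ i ∈ Icc 1 I,
      q ^ (-∑ j ∈ Icc 1 i, (n j : ℤ)) * qint q (m i) / qint q (v i) *
        ∏ l ∈ Icc 1 (i - 1), qint q ((n l : ℤ) + v (l - 1)) / qint q (v l)
      = 1 - q ^ (∑ i ∈ Icc 1 I, (m i : ℤ)) *
          ∏ l ∈ Icc 1 I, qint q ((n l : ℤ) + v (l - 1)) / qint q (v l) := by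
  have hterm : ∀ i ∈ Icc 1 I,
      q ^ (-∑ j ∈ Icc 1 i, (n j : ℤ)) * qint q (m i) / qint q (v i) *
          ∏ l ∈ Icc 1 (i - 1), qint q ((n l : ℤ) + v (l - 1)) / qint q (v l)
        = scaledQProd q m n v (i - 1) - scaledQProd q m n v i := by
    intro i hi
    obtain ⟨k, rfl⟩ : ∃ k, i = k + 1 := ⟨i - 1, by grind⟩
    exact zpow_neg_mul_qint_div_mul_prod_eq_scaledQProd_sub hq hpos hv (hn _ hi)
  rw [sum_congr rfl hterm, sum_Icc_one_pred_sub]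
  simp [scaledQProd]

/-- Lemma (lemma-app-15): with `v_i = ∑_{j≤i}(n_j+m_j)`, `v_0 = 0`,
`∑_{i=1}^I q^{-∑_{j≤i}n_j}[m_i]/[v_i] ∏_{l<i}[n_l+v_{l-1}]/[v_l]
  = 1 - q^{∑ m_i} ∏_{l=1}^I [n_l+v_{l-1}]/[v_l]`. -/
theorem sum_rule_app15 {K : Type*} [Field K] (q : K)
    (hq : q ≠ 0) (hq2 : q ^ 2 ≠ 1)
    (hpos : ∀ n : ℤ, 1 ≤ n → qint q n ≠ 0)
    (I : ℕ) (m n : ℕ → ℕ)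
    (hm : ∀ i ∈ Icc 1 I, 1 ≤ m i) (hn : ∀ i ∈ Icc 1 I, 1 ≤ n i)
    (v : ℕ → ℤ) (hv : ∀ i, v i = ∑ j ∈ Icc 1 i, ((n j : ℤ) + (m j : ℤ))) :
    ∑ i ∈ Icc 1 I,
      q ^ (-∑ j ∈ Icc 1 i, (n j : ℤ)) * qint q (m i) / qint q (v i) *
        ∏ l ∈ Icc 1 (i - 1), qint q ((n l : ℤ) + v (l - 1)) / qint q (v l)
      = 1 - q ^ (∑ i ∈ Icc 1 I, (m i : ℤ)) *
          ∏ l ∈ Icc 1 I, qint q ((n l : ℤ) + v (l - 1)) / qint q (v l) :=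
  sum_rule_app15_general q hq hpos I m n hn v hv
end

section
/- Let n_1,…,n_I and m_1,…,m_I be positive integers and v_i := \sum_{j=1}^{i}(n_j + m_j) with v_0 = 0. Then \sum_{i=1}^{I} q^{-\sum_{k=1}^{i} n_k}·[m_i]/[1 + n_i + v_{i-1}] · \prod_{j=1}^{i-1} [n_j + v_{j-1}]/[v_j] · \prod_{j=i+1}^{I} [1 + v_j]/[1 + n_j + v_{j-1}] · { (1 + q^{-2})·q^{\sum_{k=1}^{i-1} m_k} - q^{-1 - \sum_{k=1}^{i} n_k}·[m_i - 1]/[v_i] } = q^{-1}·\prod_{j=1}^{I} [1 + v_j]/[1 + n_j + v_{j-1}] - q^{2\sum_{k=1}^{I} m_k - 1}·\prod_{i=1}^{I} [n_i + v_{i-1}]/[v_i], where [n] is the quantum integer. -/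
/-!
Write `R_I` for the right-hand side and `a_j = [1+v_j]/[1+n_j+v_{j-1}]`. Then `R_0 = 0`, and the
`i`-th summand is `(R_i - a_i R_{i-1}) ∏_{j>i} a_j`, so the sum telescopes to `R_I`. Once the
common factor `q^{2(m_1+⋯+m_{i-1})} ∏_{j<i}[n_j+v_{j-1}]/[v_j]` is split off, the increment
identity is the case `I = 1` with `n_1, m_1` replaced by `s = n_i + v_{i-1}, c = m_i`: an identity
between quantum integers that becomes a Laurent polynomial identity in `q, q^s, q^c` once
denominators are cleared.
-/

open Finset

theorem sum_Icc_sub_mul_prod {R : Type*} [CommRing R] (r a : ℕ → R) (I : ℕ) :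
    ∑ i ∈ Icc 1 I, (r i - a i * r (i - 1)) * ∏ j ∈ Icc (i + 1) I, a j
      = r I - r 0 * ∏ j ∈ Icc 1 I, a j := by
  induction I with
  | zero => simp
  | succ I ih =>
    have hprod : ∀ i ∈ Icc 1 I,
        ∏ j ∈ Icc (i + 1) (I + 1), a j = (∏ j ∈ Icc (i + 1) I, a j) * a (I + 1) :=
      fun i hi ↦ prod_Icc_succ_top (by simp at hi; omega) _
    rw [sum_Icc_succ_top (by omega), sum_congr rfl fun i hi ↦ by rw [hprod i hi, ← mul_assoc],
      ← sum_mul, ih, Icc_eq_empty (by omega : ¬I + 1 + 1 ≤ I + 1), prod_empty,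
      prod_Icc_succ_top (by omega : 1 ≤ I + 1), Nat.add_sub_cancel]
    ring

section

variable {K : Type*} [Field K] {q : K}

lemma qint_step_identity (hq : q ≠ 0) (s c : ℤ) :
    q ^ (-s) * qint q c * ((1 + q ^ (-2 : ℤ)) * qint q (s + c) - q ^ (-s - 1) * qint q (c - 1))
      = q⁻¹ * qint q (1 + s + c) * qint q (s + c) -
          q ^ (2 * c - 1) * qint q s * qint q (1 + s) := by
  have hx : q ^ s ≠ 0 := zpow_ne_zero _ hq
  have hy : q ^ c ≠ 0 := zpow_ne_zero _ hq
  rw [two_mul]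
  simp only [qint, div_eq_mul_inv, zpow_neg, zpow_add₀ hq, zpow_sub₀ hq, zpow_ofNat]
  -- both sides are homogeneous of degree two in `(q - q⁻¹)⁻¹`, so it may be zero
  generalize (q - q⁻¹)⁻¹ = d
  field_simp
  ring

lemma qint_step_identity_div (hq : q ≠ 0) {s c : ℤ} (hs : qint q (1 + s) ≠ 0)
    (hsc : qint q (s + c) ≠ 0) :
    q ^ (-s) * qint q c / qint q (1 + s) *
      ((1 + q ^ (-2 : ℤ)) - q ^ (-s - 1) * qint q (c - 1) / qint q (s + c))
    = q⁻¹ * qint q (1 + s + c) / qint q (1 + s) -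
        q ^ (2 * c - 1) * qint q s / qint q (s + c) := by
  calc _ = q ^ (-s) * qint q c *
          ((1 + q ^ (-2 : ℤ)) * qint q (s + c) - q ^ (-s - 1) * qint q (c - 1)) /
          (qint q (1 + s) * qint q (s + c)) := by field_simp
    _ = _ := by rw [qint_step_identity hq]; field_simp

noncomputable def sumRuleRhs (q : K) (m n : ℕ → ℕ) (v : ℕ → ℤ) (I : ℕ) : K :=
  q⁻¹ * (∏ j ∈ Icc 1 I, qint q (1 + v j) / qint q (1 + (n j : ℤ) + v (j - 1))) -
    q ^ (2 * (∑ k ∈ Icc 1 I, (m k : ℤ)) - 1) *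
      ∏ i ∈ Icc 1 I, qint q ((n i : ℤ) + v (i - 1)) / qint q (v i)

lemma sumRuleRhs_zero (m n : ℕ → ℕ) (v : ℕ → ℤ) : sumRuleRhs q m n v 0 = 0 := by
  simp [sumRuleRhs]

lemma summand_eq_sumRuleRhs_sub (hq : q ≠ 0) {m n : ℕ → ℕ} {v : ℕ → ℤ}
    (hv : ∀ i, v i = ∑ j ∈ Icc 1 i, ((n j : ℤ) + (m j : ℤ))) (k : ℕ)
    (hden : qint q (1 + (n (k + 1) : ℤ) + v k) ≠ 0) (hden' : qint q (v (k + 1)) ≠ 0) :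
    q ^ (-∑ l ∈ Icc 1 (k + 1), (n l : ℤ)) * qint q (m (k + 1)) /
          qint q (1 + (n (k + 1) : ℤ) + v k) *
        (∏ j ∈ Icc 1 k, qint q ((n j : ℤ) + v (j - 1)) / qint q (v j)) *
        ((1 + q ^ (-2 : ℤ)) * q ^ (∑ l ∈ Icc 1 k, (m l : ℤ)) -
          q ^ (-1 - ∑ l ∈ Icc 1 (k + 1), (n l : ℤ)) * qint q ((m (k + 1) : ℤ) - 1) /
            qint q (v (k + 1)))
      = sumRuleRhs q m n v (k + 1) -
          qint q (1 + v (k + 1)) / qint q (1 + (n (k + 1) : ℤ) + v k) * sumRuleRhs q m n v k := by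
  unfold sumRuleRhs
  set M : ℤ := ∑ l ∈ Icc 1 k, (m l : ℤ)
  have hvk : v k = ∑ l ∈ Icc 1 k, (n l : ℤ) + M := by rw [hv, sum_add_distrib]
  have hvsucc : v (k + 1) = n (k + 1) + v k + m (k + 1) := by
    rw [hv, hv k, sum_Icc_succ_top (by omega)]; ring
  have hN : -∑ l ∈ Icc 1 (k + 1), (n l : ℤ) = -(n (k + 1) + v k) + M := by
    rw [sum_Icc_succ_top (by omega)]; linarith
  have key := qint_step_identity_div hq (s := n (k + 1) + v k) (c := m (k + 1))
    (by rwa [← add_assoc]) (by rwa [← hvsucc])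
  rw [show 1 + ((n (k + 1) : ℤ) + v k) + m (k + 1) = 1 + v (k + 1) by rw [hvsucc]; ring,
    ← add_assoc, ← hvsucc] at key
  rw [sub_eq_add_neg (-1 : ℤ), hN, sum_Icc_succ_top (by omega : 1 ≤ k + 1),
    prod_Icc_succ_top (by omega : 1 ≤ k + 1), prod_Icc_succ_top (by omega : 1 ≤ k + 1),
    Nat.add_sub_cancel,
    show 2 * (M + m (k + 1)) - 1 = 2 * (m (k + 1) : ℤ) - 1 + (M + M) by ring,
    show 2 * M - 1 = -1 + (M + M) by ring,
    show -1 + (-(n (k + 1) + v k) + M) = -((n (k + 1) : ℤ) + v k) - 1 + M by ring]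
  simp only [zpow_add₀ hq, zpow_neg_one] at key ⊢
  linear_combination
    (q ^ M * q ^ M * ∏ j ∈ Icc 1 k, qint q ((n j : ℤ) + v (j - 1)) / qint q (v j)) * key

end

theorem sum_rule_app17_general {K : Type*} [Field K] (q : K)
    (hq : q ≠ 0)
    (hpos : ∀ n : ℤ, 1 ≤ n → qint q n ≠ 0)
    (I : ℕ) (m n : ℕ → ℕ)
    (hn : ∀ i ∈ Icc 1 I, 1 ≤ n i)
    (v : ℕ → ℤ) (hv : ∀ i, v i = ∑ j ∈ Icc 1 i, ((n j : ℤ) + (m j : ℤ))) :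
    ∑ i ∈ Icc 1 I,
      q ^ (-∑ k ∈ Icc 1 i, (n k : ℤ)) * qint q (m i) /
          qint q (1 + (n i : ℤ) + v (i - 1)) *
        (∏ j ∈ Icc 1 (i - 1), qint q ((n j : ℤ) + v (j - 1)) / qint q (v j)) *
        (∏ j ∈ Icc (i + 1) I, qint q (1 + v j) / qint q (1 + (n j : ℤ) + v (j - 1))) *
        ((1 + q ^ (-2 : ℤ)) * q ^ (∑ k ∈ Icc 1 (i - 1), (m k : ℤ)) -
          q ^ (-1 - ∑ k ∈ Icc 1 i, (n k : ℤ)) * qint q ((m i : ℤ) - 1) / qint q (v i))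
      = q⁻¹ * (∏ j ∈ Icc 1 I, qint q (1 + v j) / qint q (1 + (n j : ℤ) + v (j - 1))) -
          q ^ (2 * (∑ k ∈ Icc 1 I, (m k : ℤ)) - 1) *
            ∏ i ∈ Icc 1 I, qint q ((n i : ℤ) + v (i - 1)) / qint q (v i) := by
  have hv_nonneg (i : ℕ) : 0 ≤ v i := by rw [hv]; positivity
  have htel := sum_Icc_sub_mul_prod (sumRuleRhs q m n v)
    (fun j ↦ qint q (1 + v j) / qint q (1 + (n j : ℤ) + v (j - 1))) I
  rw [sumRuleRhs_zero, zero_mul, sub_zero] at htel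
  refine (sum_congr rfl fun i hi ↦ ?_).trans htel
  obtain ⟨k, rfl⟩ : ∃ k, i = k + 1 := ⟨i - 1, by simp at hi; omega⟩
  have hnk : (1 : ℤ) ≤ n (k + 1) := by exact_mod_cast hn _ hi
  have hvk : v (k + 1) = v k + (n (k + 1) + m (k + 1)) := by
    rw [hv, hv k, sum_Icc_succ_top (by omega)]
  rw [Nat.add_sub_cancel, ← summand_eq_sumRuleRhs_sub hq hv k
    (hpos _ (by linarith [hv_nonneg k])) (hpos _ (by linarith [hv_nonneg k]))]
  ring

/-- Lemma (lemma-app-17): with `v_i = ∑_{j≤i}(n_j+m_j)`, `v_0 = 0`,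
`∑_{i=1}^I q^{-∑_{k≤i}n_k}·[m_i]/[1+n_i+v_{i-1}]·∏_{j<i}[n_j+v_{j-1}]/[v_j]
   ·∏_{j=i+1}^I [1+v_j]/[1+n_j+v_{j-1}]
   ·{(1+q^{-2})q^{∑_{k<i}m_k} - q^{-1-∑_{k≤i}n_k}[m_i-1]/[v_i]}
 = q^{-1}∏_{j=1}^I [1+v_j]/[1+n_j+v_{j-1}]
   - q^{2∑ m_k - 1}∏_{i=1}^I [n_i+v_{i-1}]/[v_i]`. -/
theorem sum_rule_app17 {K : Type*} [Field K] (q : K)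
    (hq : q ≠ 0) (hq2 : q ^ 2 ≠ 1)
    (hpos : ∀ n : ℤ, 1 ≤ n → qint q n ≠ 0)
    (I : ℕ) (m n : ℕ → ℕ)
    (hm : ∀ i ∈ Icc 1 I, 1 ≤ m i) (hn : ∀ i ∈ Icc 1 I, 1 ≤ n i)
    (v : ℕ → ℤ) (hv : ∀ i, v i = ∑ j ∈ Icc 1 i, ((n j : ℤ) + (m j : ℤ))) :
    ∑ i ∈ Icc 1 I,
      q ^ (-∑ k ∈ Icc 1 i, (n k : ℤ)) * qint q (m i) /
          qint q (1 + (n i : ℤ) + v (i - 1)) *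
        (∏ j ∈ Icc 1 (i - 1), qint q ((n j : ℤ) + v (j - 1)) / qint q (v j)) *
        (∏ j ∈ Icc (i + 1) I, qint q (1 + v j) / qint q (1 + (n j : ℤ) + v (j - 1))) *
        ((1 + q ^ (-2 : ℤ)) * q ^ (∑ k ∈ Icc 1 (i - 1), (m k : ℤ)) -
          q ^ (-1 - ∑ k ∈ Icc 1 i, (n k : ℤ)) * qint q ((m i : ℤ) - 1) / qint q (v i))
      = q⁻¹ * (∏ j ∈ Icc 1 I, qint q (1 + v j) / qint q (1 + (n j : ℤ) + v (j - 1))) -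
          q ^ (2 * (∑ k ∈ Icc 1 I, (m k : ℤ)) - 1) *
            ∏ i ∈ Icc 1 I, qint q ((n i : ℤ) + v (i - 1)) / qint q (v i) :=
  sum_rule_app17_general q hq hpos I m n hn v hv
end

section
/- Let x be a positive integer, z a nonnegative integer, and m_1,…,m_K positive integers. Define I_i := \prod_{j=1}^{i} [2 + 2z + 2\sum_{k=j}^{K} m_k] / [2 + 2z + m_j + 2\sum_{k=j+1}^{K} m_k] and J_i := [m_i]·[x + 3 + 2z + \sum_{j=1}^{i} m_j + 2\sum_{j=i+1}^{K} m_j] / ([1 + x + \sum_{j=1}^{i-1} m_j]·[1 + x + \sum_{j=1}^{i} m_j]). Then \sum_{i=1}^{K} I_i·J_i + ([2z+2]/[1 + x + \sum_{i=1}^{K} m_i])·I_K = [2 + 2z + 2\sum_{i=1}^{K} m_i] / [1 + x], where [n] is the quantum integer. -/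
/-!
For the potential `P_i = I_i [2 + 2z + 2∑_{k>i} m_k] / [1 + x + ∑_{j≤i} m_j]` one has
`I_{n+1} J_{n+1} = P_n - P_{n+1}`: with `a = 2 + 2z + 2∑_{k>n+1} m_k`, `b = 1 + x + ∑_{j≤n} m_j`
and `c = m_{n+1}` this is the three-term identity `[a+c][b+c] - [a][b] = [c][a+b+c]`.
So the sum telescopes to `P_0 - P_K`, where `P_0` is the right-hand side and `P_K` the
boundary term.
-/

open Finset

theorem Finset.sum_Icc_one_eq_sub_of_eq_sub {M : Type*} [AddCommGroup M] {u g : ℕ → M} {K : ℕ}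
    (h : ∀ n < K, u (n + 1) = g n - g (n + 1)) : ∑ i ∈ Icc 1 K, u i = g 0 - g K := by
  induction K with
  | zero => simp
  | succ K ih =>
    rw [sum_Icc_succ_top (by omega), ih fun n hn => h n (by omega), h K (by omega)]
    abel

section QuantumInteger

variable {F : Type*} [Field F] (q : F)

theorem qint_mul_sub_mul (a b c : ℤ) :
    qint q (a + c) * qint q (b + c) - qint q a * qint q b = qint q c * qint q (a + b + c) := by
  rcases eq_or_ne q 0 with rfl | hq
  · simp [qint]
  simp only [qint, div_mul_div_comm, ← sub_div]
  congr 1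
  simp only [zpow_add₀ hq, zpow_neg, neg_add]
  field_simp
  ring

theorem qint_div_mul_div_eq_sub (a b c : ℤ) (hac : qint q (a + c) ≠ 0) (hb : qint q b ≠ 0)
    (hbc : qint q (b + c) ≠ 0) :
    qint q (a + 2 * c) / qint q (a + c) * (qint q c * qint q (a + b + c) / (qint q b * qint q (b + c)))
      = qint q (a + 2 * c) / qint q b
        - qint q (a + 2 * c) / qint q (a + c) * (qint q a / qint q (b + c)) := by
  field_simp
  linear_combination -qint q (a + 2 * c) * qint_mul_sub_mul q a b c

end QuantumInteger

section SumRule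

variable {F : Type*} [Field F] (q : F) (x : ℤ) (z K : ℕ) (m : ℕ → ℕ)

noncomputable def sumRuleI (i : ℕ) : F :=
  ∏ j ∈ Icc 1 i,
    qint q (2 + 2 * (z : ℤ) + 2 * ∑ k ∈ Icc j K, (m k : ℤ)) /
      qint q (2 + 2 * (z : ℤ) + (m j : ℤ) + 2 * ∑ k ∈ Icc (j + 1) K, (m k : ℤ))

noncomputable def sumRuleJ (i : ℕ) : F :=
  qint q (m i) *
    qint q (x + 3 + 2 * (z : ℤ) + (∑ j ∈ Icc 1 i, (m j : ℤ)) +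
      2 * ∑ j ∈ Icc (i + 1) K, (m j : ℤ)) /
    (qint q (1 + x + ∑ j ∈ Icc 1 (i - 1), (m j : ℤ)) *
      qint q (1 + x + ∑ j ∈ Icc 1 i, (m j : ℤ)))

noncomputable def sumRulePotential (i : ℕ) : F :=
  sumRuleI q z K m i *
    (qint q (2 + 2 * (z : ℤ) + 2 * ∑ k ∈ Icc (i + 1) K, (m k : ℤ)) /
      qint q (1 + x + ∑ j ∈ Icc 1 i, (m j : ℤ)))

theorem sumRuleI_mul_sumRuleJ_succ (hx : 0 ≤ x) (hpos : ∀ n : ℤ, 1 ≤ n → qint q n ≠ 0)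
    {n : ℕ} (hn : n < K) :
    sumRuleI q z K m (n + 1) * sumRuleJ q x z K m (n + 1)
      = sumRulePotential q x z K m n - sumRulePotential q x z K m (n + 1) := by
  have hS : ∑ j ∈ Icc 1 (n + 1), (m j : ℤ) = ∑ j ∈ Icc 1 n, (m j : ℤ) + m (n + 1) :=
    sum_Icc_succ_top (by omega) _
  have hT : ∑ k ∈ Icc (n + 1) K, (m k : ℤ) = m (n + 1) + ∑ k ∈ Icc (n + 2) K, (m k : ℤ) := by
    rw [Icc_eq_cons_Ioc (by omega), sum_cons, ← Icc_add_one_left_eq_Ioc]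
    rfl
  have hI : sumRuleI q z K m (n + 1) = sumRuleI q z K m n *
      (qint q (2 + 2 * (z : ℤ) + 2 * ∑ k ∈ Icc (n + 1) K, (m k : ℤ)) /
        qint q (2 + 2 * (z : ℤ) + (m (n + 1) : ℤ) + 2 * ∑ k ∈ Icc (n + 2) K, (m k : ℤ))) :=
    prod_Icc_succ_top (by omega) _
  have hS0 : 0 ≤ ∑ j ∈ Icc 1 n, (m j : ℤ) := by positivity
  have hT0 : 0 ≤ ∑ k ∈ Icc (n + 2) K, (m k : ℤ) := by positivity
  simp only [sumRuleJ, sumRulePotential, hI, hS, hT, Nat.add_sub_cancel]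
  generalize ∑ j ∈ Icc 1 n, (m j : ℤ) = S at *
  generalize ∑ k ∈ Icc (n + 2) K, (m k : ℤ) = T at *
  have hc : (0 : ℤ) ≤ m (n + 1) := by positivity
  linear_combination (norm := ring_nf) sumRuleI q z K m n *
    qint_div_mul_div_eq_sub q (2 + 2 * z + 2 * T) (1 + x + S) (m (n + 1))
      (hpos _ (by omega)) (hpos _ (by omega)) (hpos _ (by omega))

end SumRule

theorem sum_rule_app13_general {K' : Type*} [Field K'] (q : K')
    (hpos : ∀ n : ℤ, 1 ≤ n → qint q n ≠ 0)
    (x : ℤ) (hx : 1 ≤ x) (z : ℕ) (K : ℕ) (m : ℕ → ℕ)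
    (Ifun Jfun : ℕ → K')
    (hI : ∀ i, Ifun i =
      ∏ j ∈ Icc 1 i,
        qint q (2 + 2 * (z : ℤ) + 2 * ∑ k ∈ Icc j K, (m k : ℤ)) /
          qint q (2 + 2 * (z : ℤ) + (m j : ℤ) + 2 * ∑ k ∈ Icc (j + 1) K, (m k : ℤ)))
    (hJ : ∀ i, Jfun i =
      qint q (m i) *
        qint q (x + 3 + 2 * (z : ℤ) + (∑ j ∈ Icc 1 i, (m j : ℤ)) +
          2 * ∑ j ∈ Icc (i + 1) K, (m j : ℤ)) /
        (qint q (1 + x + ∑ j ∈ Icc 1 (i - 1), (m j : ℤ)) *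
          qint q (1 + x + ∑ j ∈ Icc 1 i, (m j : ℤ)))) :
    (∑ i ∈ Icc 1 K, Ifun i * Jfun i) +
      qint q (2 * (z : ℤ) + 2) / qint q (1 + x + ∑ i ∈ Icc 1 K, (m i : ℤ)) * Ifun K
      = qint q (2 + 2 * (z : ℤ) + 2 * ∑ i ∈ Icc 1 K, (m i : ℤ)) / qint q (1 + x) := by
  obtain rfl : Ifun = sumRuleI q z K m := funext hI
  obtain rfl : Jfun = sumRuleJ q x z K m := funext hJ
  rw [sum_Icc_one_eq_sub_of_eq_sub fun n hn =>
    sumRuleI_mul_sumRuleJ_succ q x z K m (by omega) hpos hn]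
  have hI0 : sumRuleI q z K m 0 = 1 := by simp [sumRuleI]
  simp only [sumRulePotential, hI0, zero_add, one_mul, Icc_eq_empty_of_lt zero_lt_one,
    Icc_eq_empty_of_lt K.lt_add_one, sum_empty, add_zero, mul_zero, add_comm (2 : ℤ)]
  ring

/-- Lemma (lemma-app-13): with
`I_i = ∏_{j≤i} [2+2z+2∑_{k≥j}m_k]/[2+2z+m_j+2∑_{k>j}m_k]` and
`J_i = [m_i][x+3+2z+∑_{j≤i}m_j+2∑_{j>i}m_j]/([1+x+∑_{j<i}m_j][1+x+∑_{j≤i}m_j])`,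
`∑_{i=1}^K I_i·J_i + [2z+2]/[1+x+∑ m_i]·I_K = [2+2z+2∑ m_i]/[1+x]`. -/
theorem sum_rule_app13 {K' : Type*} [Field K'] (q : K')
    (hq : q ≠ 0) (hq2 : q ^ 2 ≠ 1)
    (hpos : ∀ n : ℤ, 1 ≤ n → qint q n ≠ 0)
    (x : ℤ) (hx : 1 ≤ x) (z : ℕ) (K : ℕ) (m : ℕ → ℕ)
    (hm : ∀ i ∈ Icc 1 K, 1 ≤ m i)
    (Ifun Jfun : ℕ → K')
    (hI : ∀ i, Ifun i =
      ∏ j ∈ Icc 1 i,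
        qint q (2 + 2 * (z : ℤ) + 2 * ∑ k ∈ Icc j K, (m k : ℤ)) /
          qint q (2 + 2 * (z : ℤ) + (m j : ℤ) + 2 * ∑ k ∈ Icc (j + 1) K, (m k : ℤ)))
    (hJ : ∀ i, Jfun i =
      qint q (m i) *
        qint q (x + 3 + 2 * (z : ℤ) + (∑ j ∈ Icc 1 i, (m j : ℤ)) +
          2 * ∑ j ∈ Icc (i + 1) K, (m j : ℤ)) /
        (qint q (1 + x + ∑ j ∈ Icc 1 (i - 1), (m j : ℤ)) *
          qint q (1 + x + ∑ j ∈ Icc 1 i, (m j : ℤ)))) :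
    (∑ i ∈ Icc 1 K, Ifun i * Jfun i) +
      qint q (2 * (z : ℤ) + 2) / qint q (1 + x + ∑ i ∈ Icc 1 K, (m i : ℤ)) * Ifun K
      = qint q (2 + 2 * (z : ℤ) + 2 * ∑ i ∈ Icc 1 K, (m i : ℤ)) / qint q (1 + x) :=
  sum_rule_app13_general q hpos x hx z K m Ifun Jfun hI hJ
end
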